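/- Let α ∈ ℂ with 0 < |α| < 1 and θ = arg(α)/(2π) irrational. For j ≥ 1 let γ(j) be the unique element of Γ₀ = {-2, 2i, -2i, 1+2i, 1-2i} maximizing Re(γα^j), and suppose Re Φ(α) = 1 where Φ(z) = Σ_{j≥1} γ(j) z^j. For n ≥ 1 let γₙ(j) be the n-periodic extension of γ(1),…,γ(n) and Φₙ(z) = Σ_{j≥1} γₙ(j) zʲ. Then for all sufficiently large n, 0 < Re Φₙ(α) < 1. -/

import Mathlib

/-!
`Φₙ(α) → Φ(α)` as `n → ∞`, so `Re Φₙ(α) > 0` for large `n`. For the upper bound, `Φₙ(α)` is the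
series `Σ γₙ(j) αʲ`, and term by term `Re(γₙ(j) αʲ) ≤ Re(γ(j) αʲ)` because `γ(j)` is a maximizer.
Some `m ∈ Γ₀` other than `γ(1)` is the strict maximizer on an open arc of directions, and since
`nθ` is irrational the directions of `α^(kn+1)`, `k ∈ ℕ`, are dense in the circle. At such an
index `j = kn + 1` in the arc, `γₙ(j) = γ(1)` loses strictly to `m`, hence to `γ(j)`, so
`Re Φₙ(α) < Re Φ(α) = 1`.
-/

open Complex

/-- The finite set Γ₀ = {-2, 2i, -2i, 1+2i, 1-2i}. -/
noncomputable def Gamma0 : Finset ℂ :=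
  {-2, 2 * I, -2 * I, 1 + 2 * I, 1 - 2 * I}

open Filter Topology Finset

section PowerSeries

variable {K : Type*} [NormedField K]

lemma summable_mul_pow_succ_of_mem [CompleteSpace K] {z : K} (hz : ‖z‖ < 1) {S : Finset K}
    {g : ℕ → K} (hg : ∀ i, g i ∈ S) : Summable fun i => g i * z ^ (i + 1) := by
  refine .of_norm_bounded
    ((summable_geometric_of_lt_one (norm_nonneg z) hz).mul_left ((∑ s ∈ S, ‖s‖) * ‖z‖)) fun i => ?_
  rw [norm_mul, norm_pow, pow_succ', ← mul_assoc]
  gcongr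
  exact single_le_sum (fun s _ => norm_nonneg s) (hg i)

lemma tsum_mod_mul_pow_succ {f : ℕ → K} {n : ℕ} {z : K}
    (hs : Summable fun i => f (i % n) * z ^ (i + 1)) (hz : z ^ n ≠ 1) :
    ∑' i, f (i % n) * z ^ (i + 1) = (1 - z ^ n)⁻¹ * ∑ i ∈ range n, f i * z ^ (i + 1) := by
  have hhead : ∑ i ∈ range n, f (i % n) * z ^ (i + 1) = ∑ i ∈ range n, f i * z ^ (i + 1) :=
    sum_congr rfl fun i hi => by rw [Nat.mod_eq_of_lt (mem_range.mp hi)]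
  have htail : ∑' i, f ((i + n) % n) * z ^ (i + n + 1) = z ^ n * ∑' i, f (i % n) * z ^ (i + 1) := by
    rw [← tsum_mul_left]
    congr 1 with i
    rw [Nat.add_mod_right]
    ring
  have hsplit := hs.sum_add_tsum_nat_add n
  rw [hhead, htail] at hsplit
  rw [eq_inv_mul_iff_mul_eq₀ (sub_ne_zero.mpr hz.symm)]
  linear_combination -hsplit

lemma tendsto_inv_one_sub_pow_mul_sum {z : K} (hz : ‖z‖ < 1) {f : ℕ → K} {s : K}
    (hf : HasSum f s) : Tendsto (fun n => (1 - z ^ n)⁻¹ * ∑ i ∈ range n, f i) atTop (𝓝 s) := by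
  have hinv : Tendsto (fun n => (1 - z ^ n)⁻¹) atTop (𝓝 1) := by
    simpa using ((tendsto_pow_atTop_nhds_zero_of_norm_lt_one hz).const_sub 1).inv₀ (by simp)
  simpa using hinv.mul hf.tendsto_sum_nat

end PowerSeries

open Real in
lemma denseRange_circleExp_pow {θ : ℝ} (hθ : Irrational (θ / (2 * π))) :
    DenseRange (fun k : ℕ => Circle.exp θ ^ k) := by
  have : Fact (0 < 2 * π) := ⟨by positivity⟩
  have hexp (x : ℝ) : AddCircle.toCircle (x : AddCircle (2 * π)) = Circle.exp x := by
    rw [AddCircle.toCircle_apply_mk, div_self (by positivity), one_mul]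
  have hsurj : Function.Surjective (AddCircle.toCircle (T := 2 * π)) :=
    fun z => ⟨(z : ℂ).arg, by rw [hexp, Circle.exp_arg]⟩
  have hdense : DenseRange (fun k : ℕ => k • (θ : AddCircle (2 * π))) :=
    denseRange_zsmul_iff_nsmul.mp (AddCircle.denseRange_zsmul_coe_iff.mpr hθ)
  convert hsurj.denseRange.comp hdense AddCircle.continuous_toCircle
  simp [AddCircle.toCircle_nsmul, hexp]

open Real in
lemma exists_circleExp_pow_mul_add_one_mem {θ : ℝ} (hθ : Irrational (θ / (2 * π))) {n : ℕ}
    (hn : n ≠ 0) {U : Set Circle} (hU : IsOpen U) (hne : U.Nonempty) :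
    ∃ k : ℕ, Circle.exp θ ^ (k * n + 1) ∈ U := by
  have hθn : Irrational ((n * θ) / (2 * π)) := by
    rw [mul_div_assoc]; exact hθ.natCast_mul hn
  obtain ⟨k, hk⟩ := (denseRange_circleExp_pow hθn).exists_mem_open
    (hU.preimage (continuous_const_mul (Circle.exp θ))) (hne.preimage (mul_left_surjective _))
  refine ⟨k, ?_⟩
  rwa [pow_succ', pow_mul', ← Circle.exp_natCast_mul]

def strictArgmaxRegion (S : Finset ℂ) (m : ℂ) : Set Circle :=
  {w | ∀ γ' ∈ S, γ' ≠ m → (γ' * w).re < (m * w).re}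

lemma isOpen_strictArgmaxRegion (S : Finset ℂ) (m : ℂ) : IsOpen (strictArgmaxRegion S m) := by
  simp only [strictArgmaxRegion, Set.ofPred_forall]
  exact isOpen_biInter_finset fun γ' _ =>
    isOpen_iInter_of_finite fun _ => isOpen_lt (by fun_prop) (by fun_prop)

/-- `-2` is the strict maximizer at `w = -1`, and `1 - 2i` at `w = (3 + 4i)/5`. -/
lemma exists_ne_strictArgmaxRegion_nonempty (c : ℂ) :
    ∃ m ∈ Gamma0, m ≠ c ∧ (strictArgmaxRegion Gamma0 m).Nonempty := by
  by_cases hc : c = -2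
  · have h2I : (2 - I : ℂ) ≠ 0 := by simp [Complex.ext_iff]
    have hw : (Circle.ofConjDivSelf (2 - I) h2I : ℂ) = (3 + 4 * I) / 5 := by
      rw [Circle.ofConjDivSelf_coe, div_eq_div_iff h2I (by norm_num)]
      norm_num [Complex.ext_iff]
    refine ⟨1 - 2 * I, by simp [Gamma0], by simp [hc, Complex.ext_iff],
      Circle.ofConjDivSelf (2 - I) h2I, fun γ' hγ' hne => ?_⟩
    simp only [Gamma0, Finset.mem_insert, Finset.mem_singleton] at hγ'
    rw [hw]
    rcases hγ' with rfl | rfl | rfl | rfl | rfl <;> norm_num [Complex.ext_iff] at *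
  · refine ⟨-2, by simp [Gamma0], Ne.symm hc, -1, ?_⟩
    norm_num [strictArgmaxRegion, Gamma0]

lemma re_mul_pow_eq_norm_pow_mul (z α : ℂ) (j : ℕ) :
    (z * α ^ j).re = ‖α‖ ^ j * (z * ↑(Circle.exp (arg α) ^ j)).re := by
  conv_lhs => rw [← norm_mul_exp_arg_mul_I α]
  rw [Circle.coe_pow, Circle.coe_exp, mul_pow, mul_left_comm, ← ofReal_pow, re_ofReal_mul]

-- `γ (i % n + 1)` is `γₙ(i + 1)`.
lemma re_tsum_periodic_lt (α : ℂ) (hα0 : α ≠ 0) (habs : ‖α‖ < 1)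
    (hθ : Irrational (arg α / (2 * Real.pi))) (γ : ℕ → ℂ)
    (hγ : ∀ j : ℕ, 1 ≤ j → γ j ∈ Gamma0 ∧ ∀ γ' ∈ Gamma0, (γ' * α ^ j).re ≤ (γ j * α ^ j).re)
    {n : ℕ} (hn : n ≠ 0) :
    (∑' i, γ (i % n + 1) * α ^ (i + 1)).re < (∑' i, γ (i + 1) * α ^ (i + 1)).re := by
  obtain ⟨m, hmΓ, hm1, hU⟩ := exists_ne_strictArgmaxRegion_nonempty (γ 1)
  obtain ⟨k, hk⟩ := exists_circleExp_pow_mul_add_one_mem hθ hn (isOpen_strictArgmaxRegion _ _) hU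
  have hstrict : (γ 1 * α ^ (k * n + 1)).re < (γ (k * n + 1) * α ^ (k * n + 1)).re :=
    calc (γ 1 * α ^ (k * n + 1)).re < (m * α ^ (k * n + 1)).re := by
          rw [re_mul_pow_eq_norm_pow_mul, re_mul_pow_eq_norm_pow_mul]
          exact mul_lt_mul_of_pos_left (hk _ (hγ 1 le_rfl).1 hm1.symm) (by positivity)
      _ ≤ _ := (hγ _ (Nat.le_add_left 1 _)).2 m hmΓ
  have hmem (i : ℕ) : γ (i + 1) ∈ Gamma0 := (hγ _ (Nat.le_add_left 1 i)).1
  have hsum {g : ℕ → ℂ} (hg : ∀ i, g i ∈ Gamma0) : Summable fun i => (g i * α ^ (i + 1)).re :=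
    (hasSum_re (summable_mul_pow_succ_of_mem habs hg).hasSum).summable
  rw [re_tsum (summable_mul_pow_succ_of_mem habs fun i => hmem (i % n)),
    re_tsum (summable_mul_pow_succ_of_mem habs hmem)]
  refine (hsum fun i => hmem (i % n)).tsum_lt_tsum (i := k * n)
    (fun i => (hγ _ (Nat.le_add_left 1 i)).2 _ (hmem _)) ?_ (hsum hmem)
  simpa [Nat.mul_mod_left] using hstrict

/-- If |α| < 1, arg(α)/(2π) is irrational, γ(j) ∈ Γ₀ maximizes Re(γαʲ), and
Re Φ(α) = 1 where Φ(z) = Σ_{j≥1} γ(j)zʲ, then for all large n the truncated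
rational approximation Φₙ(α) = (1−αⁿ)⁻¹ Σ_{j=1}^n γ(j)αʲ satisfies
0 < Re Φₙ(α) < 1. -/
theorem re_Phi_n_between_zero_and_one (α : ℂ) (hα0 : α ≠ 0)
    (habs : ‖α‖ < 1) (hθ : Irrational (Complex.arg α / (2 * Real.pi)))
    (γ : ℕ → ℂ)
    (hγ : ∀ j : ℕ, 1 ≤ j → γ j ∈ Gamma0 ∧
      ∀ γ' ∈ Gamma0, (γ' * α ^ j).re ≤ (γ j * α ^ j).re)
    (hPhi : (∑' j : ℕ, γ (j + 1) * α ^ (j + 1)).re = 1) :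
    ∃ N : ℕ, ∀ n : ℕ, N ≤ n → 1 ≤ n →
      0 < (((1 - α ^ n)⁻¹ * ∑ j ∈ Finset.range n, γ (j + 1) * α ^ (j + 1)).re) ∧
      (((1 - α ^ n)⁻¹ * ∑ j ∈ Finset.range n, γ (j + 1) * α ^ (j + 1)).re) < 1 := by
  have hmem (i : ℕ) : γ (i + 1) ∈ Gamma0 := (hγ _ (Nat.le_add_left 1 i)).1
  have hlim := (continuous_re.tendsto _).comp <|
    tendsto_inv_one_sub_pow_mul_sum habs (summable_mul_pow_succ_of_mem habs hmem).hasSum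
  obtain ⟨N, hN⟩ := eventually_atTop.mp (hlim.eventually_const_lt (hPhi ▸ one_pos))
  refine ⟨N, fun n hNn hn => ⟨hN n hNn, ?_⟩⟩
  have hαn : α ^ n ≠ 1 := fun h => by
    simpa [h] using (norm_pow α n ▸ pow_lt_one₀ (norm_nonneg α) habs (by omega) :)
  rw [← tsum_mod_mul_pow_succ (f := fun i => γ (i + 1))
    (summable_mul_pow_succ_of_mem habs fun i => hmem (i % n)) hαn, ← hPhi]
  exact re_tsum_periodic_lt α hα0 habs hθ γ hγ (by omega)
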